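/- arXiv:1204.3167 — 4 statements merged into one kernel-verified Lean document; each statement's English description precedes it below -/
import Mathlib

section
/- Let V₁, ..., V_k be i.i.d. nonnegative random variables with -log Pr(V₁ > x) ∼ c x^p as x → ∞, where c > 0 and 0 < p < 1. Then -log Pr(V₁ + ... + V_k > x) ∼ c x^p as x → ∞. -/
open MeasureTheory Real Filter ProbabilityTheory
open Finset Topology

/-! Writing `A = X ^ p`, subadditivity `(x + y) ^ p ≤ x ^ p + y ^ p` (as `p ≤ 1`) reduces the
lower bound to exponential tails. If `P(A ≥ s) ≤ C e^{-r s}` and `P(B ≥ s) ≤ D e^{-r s}` for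
independent nonnegative `A`, `B`, then cutting `{A + B ≥ t}` along a grid of `N` cells into the
events `{A ≥ j t / N, B ≥ (N - 1 - j) t / N}` gives `P(A + B ≥ t) ≤ N C D e^{-r (1 - 1/N) t}`.
Letting `N → ∞`, every rate `r < c` survives summation. The upper bound is simply
`P(V₁ + ⋯ + V_k > x) ≥ P(V₁ > x)`. -/

namespace ProbabilityTheory

variable {Ω : Type*} [MeasurableSpace Ω] {μ : Measure Ω}

/- Non-strict tails `{s ≤ A}` keep every threshold of the grid cover in `HasExpTail.add`
nonnegative, even when one of the two summands is zero. -/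
def HasExpTail (μ : Measure Ω) (A : Ω → ℝ) (r : ℝ) : Prop :=
  ∃ C : ℝ, ∀ s, 0 ≤ s → μ.real {ω | s ≤ A ω} ≤ C * exp (-(r * s))

theorem hasExpTail_zero (r : ℝ) : HasExpTail μ (fun _ => 0) r := by
  refine ⟨μ.real Set.univ, fun s hs => ?_⟩
  rcases hs.eq_or_lt with rfl | hs
  · simp
  · simp only [not_le.2 hs, Set.ofPred_false, measureReal_empty]
    positivity

theorem exists_grid_le {a b t : ℝ} (ha : 0 ≤ a) (hb : 0 ≤ b) (ht : 0 ≤ t) (hab : t ≤ a + b)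
    {N : ℕ} (hN : 0 < N) : ∃ j < N, (j : ℝ) * t / N ≤ a ∧ (N - 1 - j) * t / N ≤ b := by
  rcases ht.eq_or_lt with rfl | ht
  · exact ⟨0, hN, by simpa using ha, by simpa using hb⟩
  have hN' : (0 : ℝ) < N := by exact_mod_cast hN
  set m := ⌊a * N / t⌋₊
  have hm : (m : ℝ) * t / N ≤ a := by
    have := Nat.floor_le (by positivity : 0 ≤ a * N / t)
    rw [le_div_iff₀ ht] at this
    rw [div_le_iff₀ hN']
    linarith
  by_cases hmN : m < N
  · refine ⟨m, hmN, hm, ?_⟩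
    have := Nat.lt_floor_add_one (a * N / t)
    rw [div_lt_iff₀ ht] at this
    rw [div_le_iff₀ hN']
    nlinarith
  · refine ⟨N - 1, by omega, ?_, by simp [Nat.cast_sub hN, hb]⟩
    calc ((N - 1 : ℕ) : ℝ) * t / N ≤ m * t / N := by gcongr; omega
      _ ≤ a := hm

namespace HasExpTail

variable {A B : Ω → ℝ} {r : ℝ}

theorem exists_nonneg_const (h : HasExpTail μ A r) :
    ∃ C, 0 ≤ C ∧ ∀ s, 0 ≤ s → μ.real {ω | s ≤ A ω} ≤ C * exp (-(r * s)) := by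
  obtain ⟨C, hC⟩ := h
  refine ⟨C, ?_, hC⟩
  simpa using measureReal_nonneg.trans (hC 0 le_rfl)

theorem mono_rate (h : HasExpTail μ A r) {r' : ℝ} (hr : r' ≤ r) : HasExpTail μ A r' := by
  obtain ⟨C, hC0, hC⟩ := h.exists_nonneg_const
  refine ⟨C, fun s hs => (hC s hs).trans ?_⟩
  gcongr

theorem of_le [IsFiniteMeasure μ] (h : HasExpTail μ B r) (hAB : ∀ ω, A ω ≤ B ω) :
    HasExpTail μ A r := by
  obtain ⟨C, hC⟩ := h
  exact ⟨C, fun s hs => (measureReal_mono fun ω hω => le_trans hω (hAB ω)).trans (hC s hs)⟩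

theorem of_eventually [IsZeroOrProbabilityMeasure μ] {C : ℝ}
    (h : ∀ᶠ s in atTop, μ.real {ω | s ≤ A ω} ≤ C * exp (-(r * s))) : HasExpTail μ A r := by
  obtain ⟨s₀, hs₀⟩ := eventually_atTop.1 h
  refine ⟨max C (exp (|r| * |s₀|)), fun s hs => ?_⟩
  rcases le_total s₀ s with hs₀s | hss₀
  · exact (hs₀ s hs₀s).trans (mul_le_mul_of_nonneg_right (le_max_left _ _) (exp_nonneg _))
  · have hrs : r * s ≤ |r| * |s₀| := (le_abs_self _).trans <| by
      rw [abs_mul, abs_of_nonneg hs]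
      exact mul_le_mul_of_nonneg_left (hss₀.trans (le_abs_self _)) (abs_nonneg r)
    calc μ.real {ω | s ≤ A ω} ≤ 1 := measureReal_le_one
      _ = exp (|r| * |s₀|) * exp (-(|r| * |s₀|)) := by rw [← exp_add]; simp
      _ ≤ max C (exp (|r| * |s₀|)) * exp (-(r * s)) := by
        gcongr
        exact le_max_right _ _

theorem add [IsFiniteMeasure μ] (hA : HasExpTail μ A r) (hB : HasExpTail μ B r)
    (hA0 : ∀ ω, 0 ≤ A ω) (hB0 : ∀ ω, 0 ≤ B ω) (hAB : IndepFun A B μ) {N : ℕ} (hN : 0 < N) :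
    HasExpTail μ (A + B) (r * (1 - 1 / N)) := by
  obtain ⟨C, hC0, hC⟩ := hA.exists_nonneg_const
  obtain ⟨D, hD0, hD⟩ := hB.exists_nonneg_const
  refine ⟨N * (C * D), fun t ht => ?_⟩
  set E : ℕ → Set Ω := fun j => A ⁻¹' Set.Ici (j * t / N) ∩ B ⁻¹' Set.Ici ((N - 1 - j) * t / N)
  have hcover : {ω | t ≤ (A + B) ω} ⊆ ⋃ j ∈ range N, E j := by
    intro ω hω
    obtain ⟨j, hj, hjA, hjB⟩ := exists_grid_le (hA0 ω) (hB0 ω) ht hω hN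
    exact Set.mem_biUnion (mem_range.2 hj) ⟨hjA, hjB⟩
  have hE : ∀ j ∈ range N, μ.real (E j) ≤ C * D * exp (-(r * (1 - 1 / N) * t)) := by
    intro j hj
    have hjN : (j : ℝ) + 1 ≤ N := by exact_mod_cast mem_range.1 hj
    rw [measureReal_def, hAB.measure_inter_preimage_eq_mul _ _ measurableSet_Ici measurableSet_Ici,
      ENNReal.toReal_mul, ← measureReal_def, ← measureReal_def]
    calc _ ≤ C * exp (-(r * (j * t / N))) * (D * exp (-(r * ((N - 1 - j) * t / N)))) :=
          mul_le_mul (hC _ (by positivity)) (hD _ (div_nonneg (mul_nonneg (by linarith) ht)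
            (Nat.cast_nonneg N))) measureReal_nonneg (by positivity)
      _ = C * D * exp (-(r * (1 - 1 / N) * t)) := by
        rw [mul_mul_mul_comm, ← exp_add]
        congr 2
        field_simp
        ring
  calc μ.real {ω | t ≤ (A + B) ω} ≤ μ.real (⋃ j ∈ range N, E j) :=
        measureReal_mono hcover (measure_ne_top _ _)
    _ ≤ ∑ j ∈ range N, μ.real (E j) := measureReal_biUnion_finset_le _ _
    _ ≤ ∑ j ∈ range N, C * D * exp (-(r * (1 - 1 / N) * t)) := sum_le_sum hE
    _ = N * (C * D) * exp (-(r * (1 - 1 / N) * t)) := by simp [mul_assoc]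

theorem exists_measureReal_lt_le [IsFiniteMeasure μ] {S : Ω → ℝ} {p : ℝ} (hp : 0 ≤ p)
    (h : HasExpTail μ (fun ω => S ω ^ p) r) :
    ∃ C, ∀ x, 0 ≤ x → μ.real {ω | x < S ω} ≤ C * exp (-(r * x ^ p)) := by
  obtain ⟨C, hC⟩ := h
  exact ⟨C, fun x hx => (measureReal_mono fun ω hω => rpow_le_rpow hx (le_of_lt hω) hp).trans
    (hC _ (rpow_nonneg hx p))⟩

end HasExpTail

theorem le_exp_neg_of_lt_neg_log {x a : ℝ} (hx : 0 ≤ x) (h : a < -log x) : x ≤ exp (-a) := by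
  rcases hx.eq_or_lt with rfl | hx
  · exact (exp_pos _).le
  · exact ((log_lt_iff_lt_exp hx).1 (by linarith)).le

theorem hasExpTail_rpow_of_tendsto [IsZeroOrProbabilityMeasure μ] {X : Ω → ℝ}
    (hX : ∀ ω, 0 ≤ X ω) {c p : ℝ} (hc : 0 < c) (hp : 0 < p)
    (h : Tendsto (fun x => -log (μ.real {ω | x < X ω}) / (c * x ^ p)) atTop (𝓝 1))
    {r : ℝ} (hr : r < c) : HasExpTail μ (fun ω => X ω ^ p) r := by
  have htail : ∀ᶠ y in atTop, μ.real {ω | y < X ω} ≤ exp (-(r * y ^ p)) := by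
    filter_upwards [h.eventually (eventually_gt_nhds ((div_lt_one hc).2 hr)),
      eventually_gt_atTop 0] with y hy hy0
    refine le_exp_neg_of_lt_neg_log measureReal_nonneg ?_
    calc r * y ^ p = r / c * (c * y ^ p) := by field_simp
      _ < _ := (lt_div_iff₀ (by positivity)).1 hy
  have hshift : Tendsto (fun s : ℝ => (s - 1) ^ p⁻¹) atTop atTop :=
    (tendsto_rpow_atTop (inv_pos.2 hp)).comp (tendsto_atTop_add_const_right _ (-1) tendsto_id)
  -- the shift by `1` trades the strict tail of `X` for the non-strict tail of `X ^ p`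
  refine HasExpTail.of_eventually (C := exp r) ?_
  filter_upwards [hshift.eventually htail, eventually_ge_atTop 1] with s hs hs1
  calc μ.real {ω | s ≤ X ω ^ p} ≤ μ.real {ω | (s - 1) ^ p⁻¹ < X ω} :=
        measureReal_mono fun ω (hω : s ≤ X ω ^ p) =>
          (rpow_inv_lt_iff_of_pos (by linarith) (hX ω) hp).2 (by linarith)
    _ ≤ exp (-(r * ((s - 1) ^ p⁻¹) ^ p)) := hs
    _ = exp r * exp (-(r * s)) := by
      rw [rpow_inv_rpow (by linarith) hp.ne', ← exp_add]
      ring_nf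

theorem forall_hasExpTail_rpow_add [IsFiniteMeasure μ] {X Y : Ω → ℝ} {c p : ℝ} (hp : 0 < p)
    (hp1 : p ≤ 1) (hX0 : ∀ ω, 0 ≤ X ω) (hY0 : ∀ ω, 0 ≤ Y ω) (hXY : IndepFun X Y μ)
    (hX : ∀ r < c, HasExpTail μ (fun ω => X ω ^ p) r)
    (hY : ∀ r < c, HasExpTail μ (fun ω => Y ω ^ p) r) :
    ∀ r < c, HasExpTail μ (fun ω => (X ω + Y ω) ^ p) r := by
  intro r hr
  obtain ⟨N, hN, hrN⟩ : ∃ N : ℕ, 0 < N ∧ r ≤ (r + c) / 2 * (1 - 1 / N) := by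
    have : Tendsto (fun N : ℕ => (r + c) / 2 * (1 - 1 / (N : ℝ))) atTop (𝓝 ((r + c) / 2)) := by
      simpa using (tendsto_one_div_atTop_nhds_zero_nat.const_sub 1).const_mul ((r + c) / 2)
    obtain ⟨N, hN⟩ := ((eventually_gt_atTop 0).and
      (this.eventually (eventually_gt_nhds (show r < (r + c) / 2 by linarith)))).exists
    exact ⟨N, hN.1, hN.2.le⟩
  have hXYp := hXY.comp (measurable_id.pow_const p) (measurable_id.pow_const p)
  refine (((hX _ (by linarith)).add (hY _ (by linarith)) (fun ω => rpow_nonneg (hX0 ω) p)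
    (fun ω => rpow_nonneg (hY0 ω) p) hXYp hN).mono_rate hrN).of_le fun ω => ?_
  exact rpow_add_le_add_rpow (hX0 ω) (hY0 ω) hp.le hp1

theorem iIndepFun.forall_hasExpTail_rpow_sum [IsFiniteMeasure μ] {ι : Type*} {V : ι → Ω → ℝ}
    (hV : iIndepFun V μ) (hVm : ∀ i, Measurable (V i)) (hV0 : ∀ i ω, 0 ≤ V i ω) {c p : ℝ}
    (hp : 0 < p) (hp1 : p ≤ 1) (hVtail : ∀ i, ∀ r < c, HasExpTail μ (fun ω => V i ω ^ p) r)
    (s : Finset ι) : ∀ r < c, HasExpTail μ (fun ω => (∑ i ∈ s, V i ω) ^ p) r := by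
  classical
  induction s using Finset.induction_on with
  | empty => simpa [zero_rpow hp.ne'] using fun r _ => hasExpTail_zero (μ := μ) r
  | insert i s hi ih =>
    have hind : IndepFun (V i) (fun ω => ∑ j ∈ s, V j ω) μ := by
      simpa only [Finset.sum_fn] using (hV.indepFun_finsetSum_of_notMem hVm hi).symm
    simpa only [sum_insert hi] using forall_hasExpTail_rpow_add hp hp1 (hV0 i)
      (fun ω => sum_nonneg fun j _ => hV0 j ω) hind (hVtail i) ih

theorem tendsto_neg_log_div_of_le {f q : ℝ → ℝ} {c p : ℝ} (hc : 0 < c) (hp : 0 < p)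
    (hf0 : ∀ x, 0 ≤ f x) (hfq : ∀ x, f x ≤ q x)
    (hf : Tendsto (fun x => -log (f x) / (c * x ^ p)) atTop (𝓝 1))
    (hq : ∀ r < c, ∃ C, ∀ x, 0 ≤ x → q x ≤ C * exp (-(r * x ^ p))) :
    Tendsto (fun x => -log (q x) / (c * x ^ p)) atTop (𝓝 1) := by
  have hcx : Tendsto (fun x => c * x ^ p) atTop atTop :=
    (tendsto_rpow_atTop hp).const_mul_atTop hc
  have hfpos : ∀ᶠ x in atTop, 0 < f x := by
    filter_upwards [hf.eventually (eventually_ne_nhds one_ne_zero)] with x hx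
    exact (hf0 x).lt_of_ne' fun h => hx (by simp [h])
  refine tendsto_order.2 ⟨fun a ha => ?_, fun a ha => ?_⟩
  · obtain ⟨C, hC⟩ := hq (c * (1 + a) / 2) (by nlinarith)
    have hsmall : Tendsto (fun x => log C / (c * x ^ p)) atTop (𝓝 0) :=
      tendsto_const_nhds.div_atTop hcx
    filter_upwards [hfpos, hcx.eventually_gt_atTop 0, eventually_ge_atTop 0,
      hsmall.eventually (eventually_lt_nhds (show (0 : ℝ) < (1 - a) / 2 by linarith))]
      with x hfx hcxp hx hlogC
    have hqx : 0 < q x := hfx.trans_le (hfq x)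
    have hC0 : 0 < C := pos_of_mul_pos_left (hqx.trans_le (hC x hx)) (exp_pos _).le
    have hlogq := log_le_log hqx (hC x hx)
    rw [log_mul hC0.ne' (exp_pos _).ne', log_exp] at hlogq
    rw [div_lt_iff₀ hcxp] at hlogC
    rw [lt_div_iff₀ hcxp]
    nlinarith
  · filter_upwards [hfpos, hcx.eventually_gt_atTop 0, hf.eventually (eventually_lt_nhds ha)]
      with x hfx hcxp hlt
    refine lt_of_le_of_lt ?_ hlt
    gcongr
    exact hfq x

end ProbabilityTheory

/-- For a fixed number `k` of i.i.d. nonnegative random variables with Weibull-like tail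
`-log Pr(V₁ > x) ∼ c x^p` (`0 < p < 1`), the sum has the same logarithmic tail asymptotics:
`-log Pr(V₁ + ⋯ + V_k > x) ∼ c x^p` as `x → ∞`. -/
theorem stmt_3
    {Ω : Type*} [MeasurableSpace Ω] (μ : Measure Ω) [IsProbabilityMeasure μ]
    (k : ℕ) (hk : 1 ≤ k) (V : Fin k → Ω → ℝ)
    (hVmeas : ∀ i, Measurable (V i)) (hVnn : ∀ i ω, 0 ≤ V i ω)
    (hiid : iIndepFun V μ)
    (hident : ∀ i : Fin k, Measure.map (V i) μ = Measure.map (V ⟨0, hk⟩) μ)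
    (c p : ℝ) (hc : 0 < c) (hp : 0 < p) (hp1 : p < 1)
    (htail :
      Tendsto
        (fun x : ℝ => (-Real.log ((μ {ω | V ⟨0, hk⟩ ω > x}).toReal)) / (c * x ^ p))
        atTop (nhds 1)) :
    Tendsto
      (fun x : ℝ => (-Real.log ((μ {ω | (∑ i, V i ω) > x}).toReal)) / (c * x ^ p))
      atTop (nhds 1) := by
  have htail_i (i : Fin k) :
      Tendsto (fun x => -log (μ.real {ω | x < V i ω}) / (c * x ^ p)) atTop (𝓝 1) := by
    have hVi : IdentDistrib (V i) (V ⟨0, hk⟩) μ μ :=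
      ⟨(hVmeas i).aemeasurable, (hVmeas _).aemeasurable, hident i⟩
    refine htail.congr fun x => ?_
    change _ = -log (μ (V i ⁻¹' Set.Ioi x)).toReal / _
    rw [hVi.measure_mem_eq measurableSet_Ioi]
    rfl
  have hsum := hiid.forall_hasExpTail_rpow_sum hVmeas hVnn hp hp1.le
    (fun i _ hr => hasExpTail_rpow_of_tendsto (hVnn i) hc hp (htail_i i) hr) Finset.univ
  refine tendsto_neg_log_div_of_le hc hp (fun _ => measureReal_nonneg)
    (fun x => measureReal_mono fun ω hω => ?_) htail
    fun r hr => (hsum r hr).exists_measureReal_lt_le hp.le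
  exact lt_of_lt_of_le hω (single_le_sum (fun i _ => hVnn i ω) (mem_univ _))
end

section
/- Let L and D be independent nonnegative random variables with Pr(L > x) = e^{-πλx²} (λ > 0) and Pr(D ≤ x) = 1 - (1 - x/ρ)² for 0 ≤ x ≤ ρ. Then Pr(L > D/2) = (2/ρ)∫₀^ρ e^{-πλτ²/4}(1 - τ/ρ) dτ, and consequently -log Pr(L > D/2) ∼ (1/2) log ℓ as ℓ → ∞, where ℓ = 2√3 ρ² λ. -/
/-!
Conditioning on `D`, independence gives `Pr(L > D/2) = E[T(D/2)]` with `T` the tail of `L`, and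
the law of `D` has density `(2/ρ)(1 - x/ρ)` on `(0, ρ]`; this gives the integral formula. For the
asymptotics, the integral `C(ρ) = ∫₀^ρ e^{-πλτ²/4}(1 - τ/ρ) dτ` stays between two positive constants
(`∫₀¹ e^{-πλτ²/4}(1 - τ) dτ` and the full Gaussian integral), so
`-log Pr(L > D/2) = log ρ + O(1) = (1/2) log ℓ + O(1)`.
-/

open MeasureTheory Real Filter ProbabilityTheory intervalIntegral

open Set Asymptotics Topology
open scoped ENNReal

theorem ProbabilityTheory.IndepFun.measure_preimage_eq_lintegral {Ω α β : Type*}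
    [MeasurableSpace Ω] [MeasurableSpace α] [MeasurableSpace β] {μ : Measure Ω} [IsFiniteMeasure μ]
    {X : Ω → α} {Y : Ω → β} (hXY : IndepFun X Y μ) (hX : Measurable X) (hY : Measurable Y)
    {s : Set (α × β)} (hs : MeasurableSet s) :
    μ ((fun ω => (X ω, Y ω)) ⁻¹' s) = ∫⁻ y, μ (X ⁻¹' ((fun x => (x, y)) ⁻¹' s)) ∂μ.map Y := by
  rw [← Measure.map_apply (hX.prodMk hY) hs,
    (indepFun_iff_map_prod_eq_prod_map_map hX.aemeasurable hY.aemeasurable).mp hXY,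
    Measure.prod_apply_symm hs]
  exact lintegral_congr fun y => Measure.map_apply hX (measurable_prodMk_right hs)

noncomputable def triangularLaw (ρ : ℝ) : Measure ℝ :=
  (volume.restrict (Ioc 0 ρ)).withDensity fun x => ENNReal.ofReal (2 / ρ * (1 - x / ρ))

lemma lintegral_Ioc_triangular {ρ m : ℝ} (hρ : 0 < ρ) (hm : 0 ≤ m) (hmρ : m ≤ ρ) :
    ∫⁻ x in Ioc 0 m, ENNReal.ofReal (2 / ρ * (1 - x / ρ)) =
      ENNReal.ofReal (1 - (1 - m / ρ) ^ 2) := by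
  have hderiv : ∀ x ∈ uIcc 0 m,
      HasDerivAt (fun x => -(1 - x / ρ) ^ 2) (2 / ρ * (1 - x / ρ)) x := by
    intro x _
    refine ((((hasDerivAt_id' x).div_const ρ).const_sub 1).fun_pow 2).fun_neg.congr_deriv ?_
    norm_num
    ring
  rw [← ofReal_integral_eq_lintegral_ofReal, ← integral_of_le hm,
    integral_eq_sub_of_hasDerivAt hderiv ((by fun_prop : Continuous _).intervalIntegrable _ _)]
  · ring_nf
  · exact (by fun_prop : Continuous fun x : ℝ => 2 / ρ * (1 - x / ρ)).integrableOn_Ioc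
  · filter_upwards [ae_restrict_mem measurableSet_Ioc] with x hx
    have : x / ρ ≤ 1 := (div_le_one hρ).2 (hx.2.trans hmρ)
    exact mul_nonneg (by positivity) (by linarith)

lemma triangularLaw_Iic {ρ : ℝ} (hρ : 0 < ρ) (a : ℝ) :
    triangularLaw ρ (Iic a) = ENNReal.ofReal (1 - (1 - max 0 (min a ρ) / ρ) ^ 2) := by
  have hIoc : Iic a ∩ Ioc 0 ρ = Ioc 0 (max 0 (min a ρ)) := by
    ext x; simp only [mem_inter_iff, mem_Iic, mem_Ioc, le_max_iff, le_min_iff]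
    constructor
    · rintro ⟨hxa, hx0, hxρ⟩; exact ⟨hx0, Or.inr ⟨hxa, hxρ⟩⟩
    · rintro ⟨hx0, h | ⟨hxa, hxρ⟩⟩
      · linarith
      · exact ⟨hxa, hx0, hxρ⟩
  rw [triangularLaw, withDensity_apply _ measurableSet_Iic, Measure.restrict_restrict
    measurableSet_Iic, hIoc, lintegral_Ioc_triangular hρ (le_max_left _ _)
    (max_le hρ.le (min_le_right _ _))]

lemma map_eq_triangularLaw {Ω : Type*} [MeasurableSpace Ω] {μ : Measure Ω}
    [IsProbabilityMeasure μ] {D : Ω → ℝ} (hD : Measurable D) (hDnn : ∀ ω, 0 ≤ D ω)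
    {ρ : ℝ} (hρ : 0 < ρ)
    (hcdf : ∀ x, 0 ≤ x → x ≤ ρ → (μ {ω | D ω ≤ x}).toReal = 1 - (1 - x / ρ) ^ 2) :
    μ.map D = triangularLaw ρ := by
  have hcdf' : ∀ x, 0 ≤ x → x ≤ ρ → μ {ω | D ω ≤ x} = ENNReal.ofReal (1 - (1 - x / ρ) ^ 2) :=
    fun x hx0 hxρ => by rw [← hcdf x hx0 hxρ, ENNReal.ofReal_toReal (measure_ne_top _ _)]
  have : IsProbabilityMeasure (μ.map D) := Measure.isProbabilityMeasure_map hD.aemeasurable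
  refine Measure.ext_of_Iic _ _ fun a => ?_
  rw [Measure.map_apply hD measurableSet_Iic, triangularLaw_Iic hρ]
  rcases lt_or_ge a 0 with ha0 | ha0
  · have hempty : D ⁻¹' Iic a = ∅ :=
      eq_empty_of_forall_notMem fun ω hω => (hDnn ω).not_gt (lt_of_le_of_lt hω ha0)
    rw [hempty, max_eq_left (min_le_of_left_le ha0.le)]
    simp
  rcases le_or_gt a ρ with haρ | haρ
  · rw [min_eq_left haρ, max_eq_right ha0]
    exact hcdf' a ha0 haρ
  · rw [min_eq_right haρ.le, max_eq_right hρ.le, div_self hρ.ne']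
    have hρ1 : μ {ω | D ω ≤ ρ} = 1 := by simpa [div_self hρ.ne'] using hcdf' ρ hρ.le le_rfl
    rw [sub_self, zero_pow two_ne_zero, sub_zero, ENNReal.ofReal_one]
    exact le_antisymm prob_le_one
      (hρ1 ▸ measure_mono fun ω (hω : D ω ≤ ρ) => hω.trans haρ.le)

lemma integral_triangularLaw {ρ : ℝ} (hρ : 0 < ρ) (g : ℝ → ℝ) :
    ∫ x, g x ∂triangularLaw ρ = 2 / ρ * ∫ τ in 0..ρ, g τ * (1 - τ / ρ) := by
  rw [triangularLaw, integral_withDensity_eq_integral_toReal_smul (by fun_prop)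
    (ae_of_all _ fun _ => ENNReal.ofReal_lt_top), integral_of_le hρ.le,
    ← MeasureTheory.integral_const_mul]
  refine setIntegral_congr_fun measurableSet_Ioc fun x hx => ?_
  have : x / ρ ≤ 1 := (div_le_one hρ).2 hx.2
  rw [ENNReal.toReal_ofReal (mul_nonneg (by positivity) (by linarith)), smul_eq_mul]
  ring

lemma measure_half_lt_eq_integral {Ω : Type*} [MeasurableSpace Ω] {μ : Measure Ω}
    [IsProbabilityMeasure μ] {L D : Ω → ℝ} (hL : Measurable L) (hD : Measurable D)
    (hDnn : ∀ ω, 0 ≤ D ω) (hind : IndepFun L D μ) {T : ℝ → ℝ}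
    (htail : ∀ x, 0 ≤ x → (μ {ω | L ω > x}).toReal = T x) {ρ : ℝ} (hρ : 0 < ρ)
    (hcdf : ∀ x, 0 ≤ x → x ≤ ρ → (μ {ω | D ω ≤ x}).toReal = 1 - (1 - x / ρ) ^ 2) :
    (μ {ω | L ω > D ω / 2}).toReal = 2 / ρ * ∫ τ in 0..ρ, T (τ / 2) * (1 - τ / ρ) := by
  have hanti : Antitone fun d : ℝ => μ (L ⁻¹' Ioi (d / 2)) := fun d d' h =>
    measure_mono fun ω (hω : d' / 2 < L ω) => show d / 2 < L ω by linarith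
  have hDnn_ae : ∀ᵐ d ∂μ.map D, 0 ≤ d :=
    (ae_map_iff hD.aemeasurable measurableSet_Ici).2 (ae_of_all _ hDnn)
  calc (μ {ω | L ω > D ω / 2}).toReal
      = (∫⁻ d, μ (L ⁻¹' Ioi (d / 2)) ∂μ.map D).toReal :=
        congrArg ENNReal.toReal (hind.measure_preimage_eq_lintegral hL hD
          (s := {p | p.2 / 2 < p.1}) (measurableSet_lt (by fun_prop) measurable_fst))
    _ = ∫ d, (μ (L ⁻¹' Ioi (d / 2))).toReal ∂μ.map D :=
        (integral_toReal hanti.measurable.aemeasurable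
          (ae_of_all _ fun _ => measure_lt_top _ _)).symm
    _ = ∫ d, T (d / 2) ∂μ.map D :=
        integral_congr_ae (hDnn_ae.mono fun d hd => htail (d / 2) (by positivity))
    _ = 2 / ρ * ∫ τ in 0..ρ, T (τ / 2) * (1 - τ / ρ) := by
        rw [map_eq_triangularLaw hD hDnn hρ hcdf, integral_triangularLaw hρ]

lemma intervalIntegral_mul_one_sub_div_le_integral {g : ℝ → ℝ} (hg : Integrable g)
    (hg0 : ∀ x, 0 ≤ g x) {ρ : ℝ} (hρ : 0 < ρ) :
    ∫ τ in 0..ρ, g τ * (1 - τ / ρ) ≤ ∫ τ, g τ := by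
  rw [integral_of_le hρ.le]
  calc ∫ τ in Ioc 0 ρ, g τ * (1 - τ / ρ)
      ≤ ∫ τ in Ioc 0 ρ, g τ := by
        refine integral_mono_of_nonneg ?_ hg.integrableOn ?_ <;>
          filter_upwards [ae_restrict_mem measurableSet_Ioc] with τ hτ
        · have : τ / ρ ≤ 1 := (div_le_one hρ).2 hτ.2
          exact mul_nonneg (hg0 τ) (by linarith)
        · have : 0 < τ / ρ := div_pos hτ.1 hρ
          nlinarith [hg0 τ]
    _ ≤ ∫ τ, g τ := setIntegral_le_integral hg (ae_of_all _ hg0)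

lemma intervalIntegral_mul_one_sub_le_intervalIntegral_mul_one_sub_div {g : ℝ → ℝ}
    (hg : Continuous g) (hg0 : ∀ x, 0 ≤ g x) {ρ : ℝ} (hρ : 1 ≤ ρ) :
    ∫ τ in 0..1, g τ * (1 - τ) ≤ ∫ τ in 0..ρ, g τ * (1 - τ / ρ) := by
  have hρ0 : 0 < ρ := one_pos.trans_le hρ
  have hint : Continuous fun τ => g τ * (1 - τ / ρ) := by fun_prop
  rw [← integral_add_adjacent_intervals (hint.intervalIntegrable 0 1)
    (hint.intervalIntegrable 1 ρ)]
  have htail : 0 ≤ ∫ τ in 1..ρ, g τ * (1 - τ / ρ) := by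
    refine integral_nonneg hρ fun τ hτ => mul_nonneg (hg0 τ) ?_
    linarith [(div_le_one hρ0).2 hτ.2]
  have hhead : ∫ τ in 0..1, g τ * (1 - τ) ≤ ∫ τ in 0..1, g τ * (1 - τ / ρ) := by
    refine integral_mono_on zero_le_one ((by fun_prop : Continuous fun τ => g τ * (1 - τ))
      |>.intervalIntegrable 0 1) (hint.intervalIntegrable 0 1) fun τ hτ => ?_
    have : τ / ρ ≤ τ := div_le_self hτ.1 hρ
    nlinarith [hg0 τ]
  linarith

lemma intervalIntegral_mul_one_sub_pos {g : ℝ → ℝ} (hg : Continuous g) (hg0 : ∀ x, 0 < g x) :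
    0 < ∫ τ in 0..1, g τ * (1 - τ) :=
  intervalIntegral_pos_of_pos_on ((by fun_prop : Continuous fun τ => g τ * (1 - τ))
    |>.intervalIntegrable 0 1) (fun τ hτ => mul_pos (hg0 τ) (by linarith [hτ.2])) one_pos

lemma tendsto_neg_log_div_half_log {C : ℝ → ℝ} {m M a : ℝ} (hm : 0 < m) (ha : 0 < a)
    (hC : ∀ᶠ ρ in atTop, C ρ ∈ Icc m M) :
    Tendsto (fun ρ => -log (2 / ρ * C ρ) / ((1 / 2) * log (a * ρ ^ 2))) atTop (𝓝 1) := by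
  set v : ℝ → ℝ := fun ρ => (1 / 2) * log (a * ρ ^ 2)
  have hv : Tendsto v atTop atTop :=
    (tendsto_log_atTop.comp ((tendsto_pow_atTop two_ne_zero).const_mul_atTop ha)).const_mul_atTop
      (by norm_num)
  have hlogC : (fun ρ => log (C ρ)) =O[atTop] (fun _ => (1 : ℝ)) :=
    (isBigO_one_iff ℝ).2 ⟨max |log m| |log M|, eventually_map.2 <| hC.mono fun ρ hρ =>
      abs_le_max_abs_abs (log_le_log hm hρ.1) (log_le_log (hm.trans_le hρ.1) hρ.2)⟩
  have hdiff : (fun ρ => -log (2 / ρ * C ρ)) - v =ᶠ[atTop]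
      fun ρ => -(log 2 + (1 / 2) * log a) - log (C ρ) := by
    filter_upwards [hC, eventually_gt_atTop 0] with ρ hCρ hρ
    have hCpos : 0 < C ρ := hm.trans_le hCρ.1
    simp only [Pi.sub_apply, v]
    rw [log_mul (by positivity) hCpos.ne', log_div two_ne_zero hρ.ne',
      log_mul ha.ne' (by positivity), log_pow]
    push_cast
    ring
  have hequiv : (fun ρ => -log (2 / ρ * C ρ)) ~[atTop] v :=
    (((isBigO_const_one ℝ _ _).sub hlogC).congr' hdiff.symm EventuallyEq.rfl).trans_isLittleO
      ((isLittleO_one_left_iff ℝ).2 (tendsto_norm_atTop_atTop.comp hv))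
  exact (isEquivalent_iff_tendsto_one (hv.eventually_ne_atTop 0)).1 hequiv

theorem stmt_6_general
    {Ω : Type*} [MeasurableSpace Ω] (μ : ℝ → Measure Ω)
    (hprob : ∀ ρ > (0 : ℝ), IsProbabilityMeasure (μ ρ))
    (L D : Ω → ℝ) (hL : Measurable L) (hD : Measurable D)
    (lam : ℝ) (hlam : 0 < lam)
    (hDnn : ∀ ω, 0 ≤ D ω)
    (hind : ∀ ρ > (0 : ℝ), IndepFun L D (μ ρ))
    (htailL : ∀ ρ > (0 : ℝ), ∀ x : ℝ, 0 ≤ x →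
      ((μ ρ) {ω | L ω > x}).toReal = Real.exp (-(π * lam * x ^ 2)))
    (hcdfD : ∀ ρ > (0 : ℝ), ∀ x : ℝ, 0 ≤ x → x ≤ ρ →
      ((μ ρ) {ω | D ω ≤ x}).toReal = 1 - (1 - x / ρ) ^ 2) :
    (∀ ρ > (0 : ℝ),
      ((μ ρ) {ω | L ω > D ω / 2}).toReal =
        (2 / ρ) * ∫ τ in (0 : ℝ)..ρ, Real.exp (-(π * lam * τ ^ 2 / 4)) * (1 - τ / ρ)) ∧
    Tendsto
      (fun ρ : ℝ =>
        (-Real.log (((μ ρ) {ω | L ω > D ω / 2}).toReal)) /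
          ((1 / 2) * Real.log (2 * Real.sqrt 3 * ρ ^ 2 * lam)))
      atTop (nhds 1) := by
  have hmeasure : ∀ ρ > (0 : ℝ), ((μ ρ) {ω | L ω > D ω / 2}).toReal =
      (2 / ρ) * ∫ τ in (0 : ℝ)..ρ, Real.exp (-(π * lam * τ ^ 2 / 4)) * (1 - τ / ρ) := by
    intro ρ hρ
    have := hprob ρ hρ
    rw [measure_half_lt_eq_integral hL hD hDnn (hind ρ hρ) (htailL ρ hρ) hρ (hcdfD ρ hρ)]
    congr 1
    refine integral_congr fun τ _ => ?_
    ring_nf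
  refine ⟨hmeasure, ?_⟩
  set g : ℝ → ℝ := fun τ => Real.exp (-(π * lam * τ ^ 2 / 4))
  have hg : Continuous g := by fun_prop
  have hg_pos : ∀ τ, 0 < g τ := fun τ => exp_pos _
  have hg_int : Integrable g := by
    simpa [g, neg_mul, mul_div_right_comm] using
      integrable_exp_neg_mul_sq (b := π * lam / 4) (by positivity)
  have hbounds : ∀ᶠ ρ in atTop,
      (∫ τ in (0 : ℝ)..ρ, g τ * (1 - τ / ρ)) ∈ Icc (∫ τ in (0 : ℝ)..1, g τ * (1 - τ)) (∫ τ, g τ) :=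
    (eventually_ge_atTop 1).mono fun ρ hρ =>
      ⟨intervalIntegral_mul_one_sub_le_intervalIntegral_mul_one_sub_div hg
          (fun τ => (hg_pos τ).le) hρ,
        intervalIntegral_mul_one_sub_div_le_integral hg_int (fun τ => (hg_pos τ).le)
          (one_pos.trans_le hρ)⟩
  have hscale : ∀ ρ : ℝ, 2 * Real.sqrt 3 * ρ ^ 2 * lam = (2 * Real.sqrt 3 * lam) * ρ ^ 2 :=
    fun ρ => by ring
  simp only [hscale]
  refine (tendsto_neg_log_div_half_log (a := 2 * Real.sqrt 3 * lam)
    (intervalIntegral_mul_one_sub_pos hg hg_pos) (by positivity) hbounds).congr' ?_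
  filter_upwards [eventually_gt_atTop 0] with ρ hρ
  rw [hmeasure ρ hρ]

/-- With `L, D` independent, `Pr(L > x) = exp (-π λ x²)` and
`Pr(D ≤ x) = 1 - (1 - x/ρ)²` on `[0, ρ]`, one has
`Pr(L > D/2) = (2/ρ) ∫₀^ρ exp (-π λ τ²/4) (1 - τ/ρ) dτ`, and
`-log Pr(L > D/2) ∼ (1/2) log ℓ` as `ℓ = 2√3 ρ² λ → ∞`. -/
theorem stmt_6
    {Ω : Type*} [MeasurableSpace Ω] (μ : ℝ → Measure Ω)
    (hprob : ∀ ρ > (0 : ℝ), IsProbabilityMeasure (μ ρ))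
    (L D : Ω → ℝ) (hL : Measurable L) (hD : Measurable D)
    (lam : ℝ) (hlam : 0 < lam)
    (hLnn : ∀ ω, 0 ≤ L ω) (hDnn : ∀ ω, 0 ≤ D ω)
    (hind : ∀ ρ > (0 : ℝ), IndepFun L D (μ ρ))
    (htailL : ∀ ρ > (0 : ℝ), ∀ x : ℝ, 0 ≤ x →
      ((μ ρ) {ω | L ω > x}).toReal = Real.exp (-(π * lam * x ^ 2)))
    (hcdfD : ∀ ρ > (0 : ℝ), ∀ x : ℝ, 0 ≤ x → x ≤ ρ →
      ((μ ρ) {ω | D ω ≤ x}).toReal = 1 - (1 - x / ρ) ^ 2) :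
    (∀ ρ > (0 : ℝ),
      ((μ ρ) {ω | L ω > D ω / 2}).toReal =
        (2 / ρ) * ∫ τ in (0 : ℝ)..ρ, Real.exp (-(π * lam * τ ^ 2 / 4)) * (1 - τ / ρ)) ∧
    Tendsto
      (fun ρ : ℝ =>
        (-Real.log (((μ ρ) {ω | L ω > D ω / 2}).toReal)) /
          ((1 / 2) * Real.log (2 * Real.sqrt 3 * ρ ^ 2 * lam)))
      atTop (nhds 1) :=
  stmt_6_general μ hprob L D hL hD lam hlam hDnn hind htailL hcdfD
end

section
/- Let N be a random variable taking integer values ≥ ν for some integer ν ≥ 2, with Pr(N = ν) > 0. Conditioned on N = n, let W be chi-square distributed with 2n degrees of freedom (i.e. Gamma(n,1)), let G be exponential with unit mean independent of W, and let L be independent with Pr(L > x) = e^{-πλx²}. For ω > 0 and α > 2, the random variable PG where P = ωL^α/W satisfies Pr(PG > x) = E[(1 + ω⁻¹ x L^{-α})^{-N}], and Pr(PG > x) ∼ ω^ν Γ(αν/2 + 1) Pr(N = ν) (πλ)^{-αν/2} x^{-ν} as x → ∞. -/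
/-!
Conditionally on `N = n`, the event `PG > x` is `{G > x W / (ω₀ L^α)}`. Integrating out
`G ~ Exp(1)` leaves `exp (-x W / (ω₀ L^α))`, and integrating out `W ~ Gamma(n, 1)` through its
Laplace transform leaves `(1 + ω₀⁻¹ x L^{-α})^{-n}`; averaging over `N` gives the formula.

For the asymptotics put `Y = ω₀⁻¹ L^{-α}`. Then `x^ν (1 + x Y)^{-N}` is dominated by
`Y^{-ν} = ω₀^ν L^{αν}`, which is integrable since `πλ L²` is `Exp(1)`, and it tends to `Y^{-ν}`
on `{N = ν}` and to `0` on `{N > ν}`. Dominated convergence and the moment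
`E L^p = (πλ)^{-p/2} Γ(p/2 + 1)` (layer-cake formula) give the constant.
-/

open MeasureTheory Real Filter ProbabilityTheory
open Set
open scoped ENNReal Topology

lemma expMeasure_Ioi {r t : ℝ} (hr : 0 < r) (ht : 0 ≤ t) :
    expMeasure r (Ioi t) = ENNReal.ofReal (exp (-(r * t))) := by
  have := isProbabilityMeasure_expMeasure hr
  have he : exp (-(r * t)) ≤ 1 := exp_le_one_iff.2 (by nlinarith)
  rw [← compl_Iic, prob_compl_eq_one_sub measurableSet_Iic, ← ofReal_cdf, cdf_expMeasure_eq hr,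
    if_pos ht, ← ENNReal.ofReal_one, ← ENNReal.ofReal_sub _ (by linarith), sub_sub_cancel]

lemma ae_pos_gammaMeasure (a r : ℝ) : ∀ᵐ w ∂gammaMeasure a r, 0 < w := by
  simp only [ae_iff, not_lt]
  change gammaMeasure a r (Iic 0) = 0
  rw [gammaMeasure, withDensity_apply _ measurableSet_Iic, setLIntegral_congr Iio_ae_eq_Iic.symm,
    lintegral_gammaPDF_of_nonpos le_rfl]

lemma gammaPDF_mul_exp_neg_mul {a r c : ℝ} (ha : 0 < a) (hr : 0 ≤ r) (hrc : 0 < r + c) (w : ℝ) :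
    gammaPDF a r w * ENNReal.ofReal (exp (-(c * w))) =
      ENNReal.ofReal ((r / (r + c)) ^ a) * gammaPDF a (r + c) w := by
  rcases lt_or_ge w 0 with hw | hw
  · simp [gammaPDF_of_neg hw]
  have := Gamma_pos_of_pos ha
  rw [gammaPDF_of_nonneg hw, gammaPDF_of_nonneg hw, ← ENNReal.ofReal_mul (by positivity),
    ← ENNReal.ofReal_mul (by positivity), div_rpow hr hrc.le, mul_assoc, ← exp_add]
  field_simp
  ring_nf

lemma lintegral_exp_neg_mul_gammaMeasure {a r c : ℝ} (ha : 0 < a) (hr : 0 ≤ r) (hrc : 0 < r + c) :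
    ∫⁻ w, ENNReal.ofReal (exp (-(c * w))) ∂gammaMeasure a r =
      ENNReal.ofReal ((r / (r + c)) ^ a) := by
  have hpdf (b : ℝ) : Measurable (gammaPDF a b) := (measurable_gammaPDFReal a b).ennreal_ofReal
  rw [gammaMeasure, lintegral_withDensity_eq_lintegral_mul _ (hpdf r) (by fun_prop)]
  simp only [Pi.mul_apply, gammaPDF_mul_exp_neg_mul ha hr hrc]
  rw [lintegral_const_mul _ (hpdf _),
    lintegral_gammaPDF_eq_one ha hrc, mul_one]

namespace ProbabilityTheory.IndepFun

variable {Ω : Type*} [MeasurableSpace Ω] {η : Measure Ω} [IsFiniteMeasure η]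

lemma measure_lt_of_map_eq_expMeasure {X G : Ω → ℝ} (hX : Measurable X) (hG : Measurable G)
    (hXG : IndepFun X G η) {r : ℝ} (hr : 0 < r) (hGlaw : η.map G = expMeasure r)
    (hXnn : ∀ᵐ ω ∂η, 0 ≤ X ω) :
    η {ω | X ω < G ω} = ∫⁻ ω, ENNReal.ofReal (exp (-(r * X ω))) ∂η := by
  have := isProbabilityMeasure_expMeasure hr
  have hs : MeasurableSet {p : ℝ × ℝ | p.1 < p.2} := measurableSet_lt measurable_fst measurable_snd
  have hXnn' : ∀ᵐ x ∂η.map X, 0 ≤ x := (ae_map_iff hX.aemeasurable measurableSet_Ici).2 hXnn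
  calc η {ω | X ω < G ω} = ((η.map X).prod (expMeasure r)) {p : ℝ × ℝ | p.1 < p.2} := by
        rw [← hGlaw, ← hXG.map_prod_eq_prod_map_map hX.aemeasurable hG.aemeasurable,
          Measure.map_apply (hX.prodMk hG) hs]
        rfl
    _ = ∫⁻ x, expMeasure r (Ioi x) ∂η.map X := Measure.prod_apply hs
    _ = ∫⁻ x, ENNReal.ofReal (exp (-(r * x))) ∂η.map X := by
        refine lintegral_congr_ae ?_
        filter_upwards [hXnn'] with x hx using expMeasure_Ioi hr hx
    _ = _ := lintegral_map (by fun_prop) hX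

lemma lintegral_exp_neg_mul_of_map_eq_gammaMeasure {C W : Ω → ℝ} (hC : Measurable C)
    (hW : Measurable W) (hCW : IndepFun C W η) {a r : ℝ} (ha : 0 < a) (hr : 0 < r)
    (hWlaw : η.map W = gammaMeasure a r) (hCnn : ∀ᵐ ω ∂η, 0 ≤ C ω) :
    ∫⁻ ω, ENNReal.ofReal (exp (-(C ω * W ω))) ∂η =
      ∫⁻ ω, ENNReal.ofReal ((r / (r + C ω)) ^ a) ∂η := by
  have := isProbabilityMeasure_gammaMeasure ha hr
  have hf : Measurable fun p : ℝ × ℝ => ENNReal.ofReal (exp (-(p.1 * p.2))) := by fun_prop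
  have hCnn' : ∀ᵐ c ∂η.map C, 0 ≤ c := (ae_map_iff hC.aemeasurable measurableSet_Ici).2 hCnn
  calc ∫⁻ ω, ENNReal.ofReal (exp (-(C ω * W ω))) ∂η
        = ∫⁻ p, ENNReal.ofReal (exp (-(p.1 * p.2))) ∂(η.map C).prod (gammaMeasure a r) := by
        rw [← hWlaw, ← hCW.map_prod_eq_prod_map_map hC.aemeasurable hW.aemeasurable,
          lintegral_map hf (hC.prodMk hW)]
    _ = ∫⁻ c, ∫⁻ w, ENNReal.ofReal (exp (-(c * w))) ∂gammaMeasure a r ∂η.map C :=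
        lintegral_prod _ hf.aemeasurable
    _ = ∫⁻ c, ENNReal.ofReal ((r / (r + c)) ^ a) ∂η.map C := by
        refine lintegral_congr_ae ?_
        filter_upwards [hCnn'] with c hc
        exact lintegral_exp_neg_mul_gammaMeasure ha hr.le (by linarith)
    _ = _ := lintegral_map (by fun_prop) hC

end ProbabilityTheory.IndepFun

lemma lt_mul_rpow_mul_div_iff {ω₀ l w x g α : ℝ} (hω₀ : 0 < ω₀) (hl : 0 < l) (hw : 0 < w) :
    x < ω₀ * l ^ α * g / w ↔ ω₀⁻¹ * x * l ^ (-α) * w < g := by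
  have hla := rpow_pos_of_pos hl α
  rw [lt_div_iff₀ hw, rpow_neg hl.le, show ω₀⁻¹ * x * (l ^ α)⁻¹ * w = x * w / (ω₀ * l ^ α) by
    field_simp, div_lt_iff₀ (by positivity), mul_comm g]

lemma measure_mul_rpow_mul_div_gt_eq_lintegral {Ω : Type*} [MeasurableSpace Ω] {η : Measure Ω}
    [IsFiniteMeasure η] {W G L : Ω → ℝ} (hW : Measurable W)
    (hG : Measurable G) (hL : Measurable L) (hind : iIndepFun ![W, G, L] η) {a : ℝ} (ha : 0 < a)
    (hWlaw : η.map W = gammaMeasure a 1) (hGlaw : η.map G = expMeasure 1)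
    (hLpos : ∀ᵐ ω ∂η, 0 < L ω) {ω₀ α x : ℝ} (hω₀ : 0 < ω₀) (hx : 0 ≤ x) :
    η {ω | ω₀ * L ω ^ α * G ω / W ω > x} =
      ∫⁻ ω, ENNReal.ofReal ((1 + ω₀⁻¹ * x * L ω ^ (-α)) ^ (-a)) ∂η := by
  set C : Ω → ℝ := fun ω => ω₀⁻¹ * x * L ω ^ (-α)
  have hC : Measurable C := by fun_prop
  have hCnn : ∀ᵐ ω ∂η, 0 ≤ C ω := hLpos.mono fun ω hl => by positivity
  have hWpos : ∀ᵐ ω ∂η, 0 < W ω :=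
    (ae_map_iff hW.aemeasurable measurableSet_Ioi).1 (hWlaw ▸ ae_pos_gammaMeasure a 1)
  have hevent : {ω | ω₀ * L ω ^ α * G ω / W ω > x} =ᵐ[η] {ω | C ω * W ω < G ω} := by
    filter_upwards [hWpos, hLpos] with ω hw hl
    exact propext (lt_mul_rpow_mul_div_iff hω₀ hl hw)
  have hmeas : ∀ i, Measurable (![W, G, L] i) := by
    intro i; fin_cases i <;> assumption
  have hWL_G : IndepFun (fun ω => (W ω, L ω)) G η := by
    simpa using hind.indepFun_prodMk hmeas 0 2 1 (by decide) (by decide)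
  have hCW_G : IndepFun (fun ω => C ω * W ω) G η :=
    hWL_G.comp (φ := fun p : ℝ × ℝ => ω₀⁻¹ * x * p.2 ^ (-α) * p.1) (by fun_prop) measurable_id
  have hC_W : IndepFun C W η := by
    have hLW : IndepFun L W η := by simpa using hind.indepFun (show (2 : Fin 3) ≠ 0 by decide)
    exact hLW.comp (φ := fun l => ω₀⁻¹ * x * l ^ (-α)) (by fun_prop) measurable_id
  rw [measure_congr hevent, hCW_G.measure_lt_of_map_eq_expMeasure (X := fun ω => C ω * W ω)
    (by fun_prop) hG one_pos hGlaw
    (by filter_upwards [hCnn, hWpos] with ω hc hw using mul_nonneg hc hw.le)]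
  simp only [one_mul]
  rw [hC_W.lintegral_exp_neg_mul_of_map_eq_gammaMeasure hC hW ha one_pos hWlaw hCnn]
  refine lintegral_congr_ae ?_
  filter_upwards [hCnn] with ω hc
  rw [one_div, inv_rpow (by positivity), rpow_neg (by positivity)]

section Fiber

variable {Ω : Type*} [MeasurableSpace Ω] {μ : Measure Ω} [IsFiniteMeasure μ]

lemma setLIntegral_eq_measure_mul_lintegral_cond {s : Set Ω} (hs : μ s ≠ 0) (g : Ω → ℝ≥0∞) :
    ∫⁻ ω in s, g ω ∂μ = μ s * ∫⁻ ω, g ω ∂μ[|s] := by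
  rw [ProbabilityTheory.cond, lintegral_smul_measure, smul_eq_mul, ← mul_assoc,
    ENNReal.mul_inv_cancel hs (measure_ne_top _ _), one_mul]

lemma setIntegral_eq_measureReal_mul_integral_cond {s : Set Ω} (hs : μ s ≠ 0) (g : Ω → ℝ) :
    ∫ ω in s, g ω ∂μ = μ.real s * ∫ ω, g ω ∂μ[|s] := by
  rw [ProbabilityTheory.cond, integral_smul_measure, smul_eq_mul, ← mul_assoc, ENNReal.toReal_inv,
    ← measureReal_def, mul_inv_cancel₀ ((measureReal_ne_zero_iff (measure_ne_top _ _)).2 hs),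
    one_mul]

variable {α : Type*} [Countable α] [MeasurableSpace α] [MeasurableSingletonClass α] {N : Ω → α}

lemma measure_eq_lintegral_of_cond_fiber (hN : Measurable N) {A : Set Ω} (hA : MeasurableSet A)
    {f : α → Ω → ℝ≥0∞}
    (hf : ∀ a, μ (N ⁻¹' {a}) ≠ 0 → μ[A | N ⁻¹' {a}] = ∫⁻ ω, f a ω ∂μ[|N ⁻¹' {a}]) :
    μ A = ∫⁻ ω, f (N ω) ω ∂μ := by
  have hS (a : α) : MeasurableSet (N ⁻¹' {a}) := hN (measurableSet_singleton a)
  have hμ : μ = Measure.sum fun a => μ.restrict (N ⁻¹' {a}) := by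
    rw [← Measure.restrict_iUnion (pairwise_disjoint_fiber N) hS, ← preimage_iUnion,
      iUnion_of_singleton, preimage_univ, Measure.restrict_univ]
  conv_lhs => rw [hμ]
  conv_rhs => rw [hμ]
  rw [Measure.sum_apply _ hA, lintegral_sum_measure]
  refine tsum_congr fun a => ?_
  rw [Measure.restrict_apply hA, inter_comm,
    setLIntegral_congr_fun (hS a) fun ω (hω : N ω = a) => by rw [hω]]
  rcases eq_or_ne (μ (N ⁻¹' {a})) 0 with h0 | h0
  · rw [measure_mono_null inter_subset_left h0, Measure.restrict_eq_zero.2 h0,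
      lintegral_zero_measure]
  · rw [← cond_mul_eq_inter (hS a), hf a h0, setLIntegral_eq_measure_mul_lintegral_cond h0,
      mul_comm]

lemma measure_eq_of_cond_fiber [IsProbabilityMeasure μ] (hN : Measurable N) {A : Set Ω}
    (hA : MeasurableSet A) {c : ℝ≥0∞} (hc : ∀ a, μ (N ⁻¹' {a}) ≠ 0 → μ[A | N ⁻¹' {a}] = c) :
    μ A = c := by
  rw [measure_eq_lintegral_of_cond_fiber hN hA (f := fun _ _ => c), lintegral_const,
    measure_univ, mul_one]
  intro a ha
  have := cond_isProbabilityMeasure ha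
  rw [hc a ha, lintegral_const, measure_univ, mul_one]

end Fiber

lemma measureReal_gt_eq_integral_rpow_neg {Ω : Type*} [MeasurableSpace Ω] {μ : Measure Ω}
    [IsProbabilityMeasure μ] {N : Ω → ℕ} (hN : Measurable N) (hNpos : ∀ ω, 0 < N ω)
    {W G L : Ω → ℝ} (hW : Measurable W) (hG : Measurable G) (hL : Measurable L)
    (hcondW : ∀ n : ℕ, 0 < μ {ω | N ω = n} →
      Measure.map W (μ[|{ω | N ω = n}]) = gammaMeasure n 1)
    (hcondG : ∀ n : ℕ, 0 < μ {ω | N ω = n} →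
      Measure.map G (μ[|{ω | N ω = n}]) = expMeasure 1)
    (hcondInd : ∀ n : ℕ, 0 < μ {ω | N ω = n} →
      iIndepFun ![W, G, L] (μ[|{ω | N ω = n}]))
    (hLpos : ∀ᵐ ω ∂μ, 0 < L ω) {ω₀ α x : ℝ} (hω₀ : 0 < ω₀) (hx : 0 ≤ x) :
    (μ {ω | ω₀ * L ω ^ α * G ω / W ω > x}).toReal =
      ∫ ω, (1 + ω₀⁻¹ * x * L ω ^ (-α)) ^ (-(N ω : ℝ)) ∂μ := by
  have hnn : 0 ≤ᵐ[μ] fun ω => (1 + ω₀⁻¹ * x * L ω ^ (-α)) ^ (-(N ω : ℝ)) := by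
    filter_upwards [hLpos] with ω hl using by positivity
  have hmeas : Measurable fun ω => (1 + ω₀⁻¹ * x * L ω ^ (-α)) ^ (-(N ω : ℝ)) :=
    (by fun_prop : Measurable fun ω => 1 + ω₀⁻¹ * x * L ω ^ (-α)).pow
      (measurable_from_top.comp hN).neg
  rw [integral_eq_lintegral_of_nonneg_ae hnn hmeas.aestronglyMeasurable,
    measure_eq_lintegral_of_cond_fiber hN
    (measurableSet_lt measurable_const (by fun_prop))
    (f := fun n ω => ENNReal.ofReal ((1 + ω₀⁻¹ * x * L ω ^ (-α)) ^ (-(n : ℝ))))]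
  intro n hn
  have : IsProbabilityMeasure (μ[|{ω | N ω = n}]) := cond_isProbabilityMeasure hn
  obtain ⟨ω, hω : N ω = n⟩ := nonempty_of_measure_ne_zero hn
  have hn' := pos_iff_ne_zero.2 hn
  exact measure_mul_rpow_mul_div_gt_eq_lintegral hW hG hL (hcondInd n hn')
    (Nat.cast_pos.2 (hω ▸ hNpos ω)) (hcondW n hn') (hcondG n hn')
    (cond_absolutelyContinuous.ae_le hLpos) hω₀ hx

lemma rpow_mul_one_add_mul_rpow_neg_le {x y a s : ℝ} (hx : 0 < x) (hy : 0 < y) (hs : 0 ≤ s) :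
    x ^ a * (1 + x * y) ^ (-s) ≤ x ^ (a - s) * y ^ (-s) :=
  calc x ^ a * (1 + x * y) ^ (-s) ≤ x ^ a * (x * y) ^ (-s) :=
        mul_le_mul_of_nonneg_left
          (rpow_le_rpow_of_nonpos (by positivity) (by linarith) (by linarith)) (by positivity)
    _ = x ^ (a - s) * y ^ (-s) := by
        rw [mul_rpow hx.le hy.le, ← mul_assoc, ← rpow_add hx, sub_eq_add_neg]

lemma tendsto_rpow_mul_one_add_mul_rpow_neg {y a s : ℝ} (hy : 0 < y) (ha : 0 ≤ a) (has : a ≤ s) :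
    Tendsto (fun x => x ^ a * (1 + x * y) ^ (-s)) atTop
      (𝓝 (if s = a then y ^ (-a) else 0)) := by
  split_ifs with h
  · subst h
    have hy' : Tendsto (fun x : ℝ => x⁻¹ + y) atTop (𝓝 y) := by
      simpa using tendsto_inv_atTop_zero.add_const y
    have hcont : Tendsto (fun x : ℝ => (x⁻¹ + y) ^ (-s)) atTop (𝓝 (y ^ (-s))) :=
      (continuousAt_rpow_const y (-s) (Or.inl hy.ne')).tendsto.comp hy'
    refine hcont.congr' ?_
    filter_upwards [eventually_gt_atTop 0] with x hx
    rw [show x⁻¹ + y = x⁻¹ * (1 + x * y) by field_simp, mul_rpow (by positivity) (by positivity),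
      inv_rpow hx.le, rpow_neg hx.le, inv_inv]
  · have hlt : 0 < s - a := sub_pos.2 (lt_of_le_of_ne has (Ne.symm h))
    have hbound : Tendsto (fun x : ℝ => x ^ (a - s) * y ^ (-s)) atTop (𝓝 0) := by
      simpa [neg_sub] using (tendsto_rpow_neg_atTop hlt).mul_const (y ^ (-s))
    refine tendsto_of_tendsto_of_tendsto_of_le_of_le' tendsto_const_nhds hbound ?_ ?_
    · filter_upwards [eventually_gt_atTop 0] with x hx using by positivity
    · filter_upwards [eventually_gt_atTop 0] with x hx
      exact rpow_mul_one_add_mul_rpow_neg_le hx hy (ha.trans has)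

lemma tendsto_rpow_mul_integral_one_add_mul_rpow_neg {Ω : Type*} [MeasurableSpace Ω]
    {η : Measure Ω} {Y s : Ω → ℝ} {a : ℝ} (hY : Measurable Y) (hs : Measurable s)
    (hYpos : ∀ᵐ ω ∂η, 0 < Y ω) (ha : 0 ≤ a) (has : ∀ ω, a ≤ s ω)
    (hint : Integrable (fun ω => Y ω ^ (-a)) η) :
    Tendsto (fun x => x ^ a * ∫ ω, (1 + x * Y ω) ^ (-s ω) ∂η) atTop
      (𝓝 (∫ ω in {ω | s ω = a}, Y ω ^ (-a) ∂η)) := by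
  rw [← integral_indicator (measurableSet_eq_fun hs measurable_const)]
  simp only [← integral_const_mul]
  refine tendsto_integral_filter_of_dominated_convergence _
    (Eventually.of_forall fun x => ?_) ?_ hint ?_
  · exact (measurable_const.mul ((measurable_const.add (measurable_const.mul hY)).pow
      hs.neg)).aestronglyMeasurable
  · filter_upwards [eventually_gt_atTop 0] with x hx
    filter_upwards [hYpos] with ω hy
    rw [norm_of_nonneg (by positivity)]
    calc x ^ a * (1 + x * Y ω) ^ (-s ω) ≤ x ^ a * (1 + x * Y ω) ^ (-a) :=
          mul_le_mul_of_nonneg_left (rpow_le_rpow_of_exponent_le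
            (by nlinarith [mul_pos hx hy]) (neg_le_neg (has ω))) (by positivity)
      _ ≤ x ^ (a - a) * Y ω ^ (-a) := rpow_mul_one_add_mul_rpow_neg_le hx hy ha
      _ = Y ω ^ (-a) := by rw [sub_self, rpow_zero, one_mul]
  · filter_upwards [hYpos] with ω hy
    simpa [indicator_apply] using tendsto_rpow_mul_one_add_mul_rpow_neg hy ha (has ω)

section RayleighTail

variable {Ω : Type*} [MeasurableSpace Ω] {η : Measure Ω} {L : Ω → ℝ} {b : ℝ}

lemma lintegral_rpow_of_measure_gt_eq_exp (hL : Measurable L) (hLnn : ∀ ω, 0 ≤ L ω) (hb : 0 < b)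
    (htail : ∀ x, 0 ≤ x → η {ω | L ω > x} = ENNReal.ofReal (exp (-(b * x ^ 2)))) {p : ℝ}
    (hp : 0 < p) :
    ∫⁻ ω, ENNReal.ofReal (L ω ^ p) ∂η = ENNReal.ofReal (b ^ (-(p / 2)) * Gamma (p / 2 + 1)) := by
  have hint := integrableOn_rpow_mul_exp_neg_mul_sq hb (show -1 < p - 1 by linarith)
  calc ∫⁻ ω, ENNReal.ofReal (L ω ^ p) ∂η
      = ENNReal.ofReal p * ∫⁻ t in Ioi 0, η {ω | t < L ω} * ENNReal.ofReal (t ^ (p - 1)) :=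
        lintegral_rpow_eq_lintegral_meas_lt_mul η (ae_of_all _ hLnn) hL.aemeasurable hp
    _ = ENNReal.ofReal p * ∫⁻ t in Ioi 0, ENNReal.ofReal (t ^ (p - 1) * exp (-b * t ^ 2)) := by
        congr 1
        refine setLIntegral_congr_fun measurableSet_Ioi fun t ht => ?_
        rw [htail t (le_of_lt ht), ← ENNReal.ofReal_mul (exp_nonneg _), mul_comm, neg_mul]
    _ = ENNReal.ofReal (p * ∫ t in Ioi 0, t ^ (p - 1) * exp (-b * t ^ 2)) := by
        rw [← ofReal_integral_eq_lintegral_ofReal hint, ENNReal.ofReal_mul hp.le]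
        filter_upwards [ae_restrict_mem measurableSet_Ioi] with t (ht : 0 < t)
        positivity
    _ = _ := by
        simp_rw [← rpow_two]
        rw [integral_rpow_mul_exp_neg_mul_rpow two_pos (by linarith) hb, sub_add_cancel,
          Gamma_add_one (by positivity), neg_div]
        congr 1
        ring

lemma integrable_rpow_of_measure_gt_eq_exp (hL : Measurable L) (hLnn : ∀ ω, 0 ≤ L ω) (hb : 0 < b)
    (htail : ∀ x, 0 ≤ x → η {ω | L ω > x} = ENNReal.ofReal (exp (-(b * x ^ 2)))) {p : ℝ}
    (hp : 0 < p) : Integrable (fun ω => L ω ^ p) η := by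
  refine ⟨(hL.pow_const p).aestronglyMeasurable, ?_⟩
  rw [hasFiniteIntegral_iff_ofReal (ae_of_all _ fun ω => rpow_nonneg (hLnn ω) p),
    lintegral_rpow_of_measure_gt_eq_exp hL hLnn hb htail hp]
  exact ENNReal.ofReal_lt_top

lemma integral_rpow_of_measure_gt_eq_exp (hL : Measurable L) (hLnn : ∀ ω, 0 ≤ L ω) (hb : 0 < b)
    (htail : ∀ x, 0 ≤ x → η {ω | L ω > x} = ENNReal.ofReal (exp (-(b * x ^ 2)))) {p : ℝ}
    (hp : 0 < p) : ∫ ω, L ω ^ p ∂η = b ^ (-(p / 2)) * Gamma (p / 2 + 1) := by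
  have := Gamma_pos_of_pos (show 0 < p / 2 + 1 by positivity)
  rw [integral_eq_lintegral_of_nonneg_ae (ae_of_all _ fun ω => rpow_nonneg (hLnn ω) p)
    (hL.pow_const p).aestronglyMeasurable, lintegral_rpow_of_measure_gt_eq_exp hL hLnn hb htail hp,
    ENNReal.toReal_ofReal (by positivity)]

lemma ae_pos_of_measure_gt_eq_exp [IsProbabilityMeasure η] (hL : Measurable L)
    (htail : ∀ x, 0 ≤ x → η {ω | L ω > x} = ENNReal.ofReal (exp (-(b * x ^ 2)))) :
    ∀ᵐ ω ∂η, 0 < L ω := by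
  rw [ae_iff_measure_eq (measurableSet_lt measurable_const hL).nullMeasurableSet, measure_univ]
  simpa using htail 0 le_rfl

end RayleighTail

lemma tendsto_rpow_mul_integral_of_measure_gt_eq_exp {Ω : Type*} [MeasurableSpace Ω]
    {μ : Measure Ω} [IsProbabilityMeasure μ] {N : Ω → ℕ} (hN : Measurable N) {ν : ℕ}
    (hNν : ∀ ω, ν ≤ N ω) (hS : μ {ω | N ω = ν} ≠ 0) {L : Ω → ℝ} (hL : Measurable L)
    (hLnn : ∀ ω, 0 ≤ L ω) {b : ℝ} (hb : 0 < b)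
    (htail : ∀ x, 0 ≤ x → μ {ω | L ω > x} = ENNReal.ofReal (exp (-(b * x ^ 2))))
    (hcondTail : ∀ x, 0 ≤ x →
      μ[{ω | L ω > x} | {ω | N ω = ν}] = ENNReal.ofReal (exp (-(b * x ^ 2))))
    {ω₀ α : ℝ} (hω₀ : 0 < ω₀) (hαν : 0 < α * ν) :
    Tendsto (fun x => x ^ (ν : ℝ) * ∫ ω, (1 + ω₀⁻¹ * x * L ω ^ (-α)) ^ (-(N ω : ℝ)) ∂μ) atTop
      (𝓝 (ω₀ ^ (ν : ℝ) * Gamma (α * ν / 2 + 1) * (μ {ω | N ω = ν}).toReal *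
        b ^ (-(α * ν / 2)))) := by
  have hLpos := ae_pos_of_measure_gt_eq_exp hL htail
  set Y : Ω → ℝ := fun ω => ω₀⁻¹ * L ω ^ (-α)
  have hYν : ∀ᵐ ω ∂μ, Y ω ^ (-(ν : ℝ)) = ω₀ ^ (ν : ℝ) * L ω ^ (α * ν) := by
    filter_upwards [hLpos] with ω hl
    rw [mul_rpow (by positivity) (by positivity), inv_rpow hω₀.le, rpow_neg hω₀.le, inv_inv,
      ← rpow_mul hl.le, neg_mul_neg]
  have hlim := tendsto_rpow_mul_integral_one_add_mul_rpow_neg (η := μ) (Y := Y)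
    (s := fun ω => (N ω : ℝ)) (by fun_prop) (measurable_from_top.comp hN)
    (hLpos.mono fun ω hl => by positivity) (Nat.cast_nonneg ν) (fun ω => by exact_mod_cast hNν ω)
    (((integrable_rpow_of_measure_gt_eq_exp hL hLnn hb htail hαν).const_mul _).congr
      (hYν.mono fun _ h => h.symm))
  have hconst : ∫ ω in {ω | (N ω : ℝ) = ν}, Y ω ^ (-(ν : ℝ)) ∂μ =
      ω₀ ^ (ν : ℝ) * Gamma (α * ν / 2 + 1) * (μ {ω | N ω = ν}).toReal * b ^ (-(α * ν / 2)) := by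
    simp only [Nat.cast_inj]
    rw [setIntegral_congr_ae (show MeasurableSet {ω | N ω = ν} from hN (measurableSet_singleton ν))
      (hYν.mono fun ω h _ => h), integral_const_mul,
      setIntegral_eq_measureReal_mul_integral_cond hS,
      integral_rpow_of_measure_gt_eq_exp hL hLnn hb hcondTail hαν, measureReal_def]
    ring
  rw [← hconst]
  refine hlim.congr fun x => ?_
  simp only [Y, show ∀ ω, x * (ω₀⁻¹ * L ω ^ (-α)) = ω₀⁻¹ * x * L ω ^ (-α) from fun ω => by ring]

/-- Rich-scattering tail lemma: with diversity order `N ≥ ν` (`ν ≥ 2`, `Pr(N = ν) > 0`),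
and conditionally on `N = n`: `W ~ Gamma(n,1)`, `G ~ Exp(1)`, `L` Rayleigh-type,
mutually independent, the power–gain product `P G` with `P = ω₀ L^α / W` satisfies
`Pr(PG > x) = E[(1 + ω₀⁻¹ x L^{-α})^{-N}]` and
`Pr(PG > x) ∼ ω₀^ν Γ(αν/2 + 1) Pr(N = ν) (π λ)^{-αν/2} x^{-ν}` as `x → ∞`. -/
theorem stmt_9
    {Ω : Type*} [MeasurableSpace Ω] (μ : Measure Ω) [IsProbabilityMeasure μ]
    (N : Ω → ℕ) (hN : Measurable N) (ν : ℕ) (hν : 2 ≤ ν) (hNν : ∀ ω, ν ≤ N ω)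
    (hNmass : 0 < (μ {ω | N ω = ν}).toReal)
    (W G L : Ω → ℝ) (hW : Measurable W) (hG : Measurable G) (hL : Measurable L)
    (lam ω₀ α : ℝ) (hlam : 0 < lam) (hω₀ : 0 < ω₀) (hα : 2 < α)
    (hLnn : ∀ ω, 0 ≤ L ω)
    (hcondW : ∀ n : ℕ, 0 < μ {ω | N ω = n} →
      Measure.map W (μ[|{ω | N ω = n}]) = gammaMeasure n 1)
    (hcondG : ∀ n : ℕ, 0 < μ {ω | N ω = n} →
      Measure.map G (μ[|{ω | N ω = n}]) = expMeasure 1)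
    (hcondL : ∀ n : ℕ, 0 < μ {ω | N ω = n} → ∀ x : ℝ, 0 ≤ x →
      ((μ[|{ω | N ω = n}]) {ω | L ω > x}).toReal = Real.exp (-(π * lam * x ^ 2)))
    (hcondInd : ∀ n : ℕ, 0 < μ {ω | N ω = n} →
      iIndepFun ![W, G, L] (μ[|{ω | N ω = n}])) :
    (∀ x : ℝ, 0 < x →
      (μ {ω | ω₀ * L ω ^ α * G ω / W ω > x}).toReal =
        ∫ ω, (1 + ω₀⁻¹ * x * L ω ^ (-α)) ^ (-(N ω : ℝ)) ∂μ) ∧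
    Tendsto
      (fun x : ℝ =>
        (μ {ω | ω₀ * L ω ^ α * G ω / W ω > x}).toReal /
          (ω₀ ^ (ν : ℝ) * Real.Gamma (α * ν / 2 + 1) * (μ {ω | N ω = ν}).toReal *
            (π * lam) ^ (-(α * ν / 2)) * x ^ (-(ν : ℝ))))
      atTop (nhds 1) := by
  have hαν : 0 < α * ν := mul_pos (by linarith) (by exact_mod_cast (by omega : 0 < ν))
  have hS : μ {ω | N ω = ν} ≠ 0 := fun h => by simp [h] at hNmass
  have hcondTail (n : ℕ) (hn : μ {ω | N ω = n} ≠ 0) (x : ℝ) (hx : 0 ≤ x) :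
      μ[{ω | L ω > x} | {ω | N ω = n}] = ENNReal.ofReal (exp (-(π * lam * x ^ 2))) := by
    rw [← hcondL n (pos_iff_ne_zero.2 hn) x hx, ENNReal.ofReal_toReal (measure_ne_top _ _)]
  have htail (x : ℝ) (hx : 0 ≤ x) :
      μ {ω | L ω > x} = ENNReal.ofReal (exp (-(π * lam * x ^ 2))) :=
    measure_eq_of_cond_fiber hN (measurableSet_lt measurable_const hL) fun n hn =>
      hcondTail n hn x hx
  have hrepr (x : ℝ) (hx : 0 < x) := measureReal_gt_eq_integral_rpow_neg (α := α) hN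
    (fun ω => by have := hNν ω; omega) hW hG hL hcondW hcondG hcondInd
    (ae_pos_of_measure_gt_eq_exp hL htail) hω₀ hx.le
  refine ⟨hrepr, ?_⟩
  have hlim := tendsto_rpow_mul_integral_of_measure_gt_eq_exp hN hNν hS hL hLnn
    (by positivity) htail (hcondTail ν hS) hω₀ hαν
  have hC : ω₀ ^ (ν : ℝ) * Gamma (α * ν / 2 + 1) * (μ {ω | N ω = ν}).toReal *
      (π * lam) ^ (-(α * ν / 2)) ≠ 0 := by
    have := Gamma_pos_of_pos (show 0 < α * ν / 2 + 1 by positivity)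
    positivity
  refine (div_self hC ▸ hlim.div_const _).congr' ?_
  filter_upwards [eventually_gt_atTop 0] with x hx
  rw [hrepr x hx, rpow_neg hx.le]
  field_simp
end

section
/- Let V be a nonnegative random variable with Pr(V > x) = E[e^{-πλ(βx/ω)^{2/α}}] where β is a random variable supported in [δ/γ, δ'/g₀] ⊂ (0, ∞) for constants 0 < δ ≤ δ' and γ > 0 (with g₀ > 0). If ε > 0 and Pr(β < (1+ε)δ/γ) > 0, then limsup_{x→∞} [-log Pr(V > x)] / [πλ(δ x/(γω))^{2/α}] ≤ (1+ε)^{2/α}. -/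
/-!
Restricting the expectation to the event `β < (1 + ε) δ / γ`, of probability `p > 0`, where the
integrand is at least `exp (-(1 + ε) ^ (2 / α) D x)` with `D x = π λ (δ x / (γ ω₀)) ^ (2 / α)`,
gives `Pr(V > x) ≥ p exp (-(1 + ε) ^ (2 / α) D x)`. After taking logarithms, the constant `log p`
is negligible against `D x → ∞`.
-/

open MeasureTheory Real Filter

theorem mul_measureReal_le_integral_of_le_on {Ω : Type*} [MeasurableSpace Ω] {μ : Measure Ω}
    [IsFiniteMeasure μ] {f : Ω → ℝ} {s : Set Ω} {c : ℝ} (hs : MeasurableSet s)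
    (hf : Integrable f μ) (hf₀ : 0 ≤ᵐ[μ] f) (hc : ∀ x ∈ s, c ≤ f x) :
    c * μ.real s ≤ ∫ x, f x ∂μ :=
  (setIntegral_ge_of_const_le_real hs (measure_ne_top μ s) hc hf.integrableOn).trans
    (setIntegral_le_integral hf hf₀)

theorem limsup_neg_log_div_le_of_mul_exp_le {ι : Type*} {l : Filter ι} [l.NeBot]
    {P D : ι → ℝ} {p L : ℝ} (hp : 0 < p) (hD : Tendsto D l atTop) (hP : ∀ᶠ i in l, P i ≤ 1)
    (hlow : ∀ᶠ i in l, p * exp (-(L * D i)) ≤ P i) :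
    limsup (fun i => -log (P i) / D i) l ≤ L := by
  have hbound : ∀ᶠ i in l, -log (P i) / D i ≤ -log p / D i + L := by
    filter_upwards [hD.eventually_gt_atTop 0, hlow] with i hDi hi
    have hlog : log p - L * D i ≤ log (P i) := by
      simpa [log_mul hp.ne' (exp_pos _).ne', log_exp, sub_eq_add_neg]
        using log_le_log (by positivity) hi
    calc -log (P i) / D i ≤ (-log p + L * D i) / D i := by gcongr; linarith
      _ = -log p / D i + L := by field_simp
  have hlim : Tendsto (fun i => -log p / D i + L) l (nhds L) := by
    simpa using (tendsto_const_nhds.div_atTop hD).add (tendsto_const_nhds (x := L))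
  have hcobdd : IsCoboundedUnder (· ≤ ·) l (fun i => -log (P i) / D i) := by
    refine isCoboundedUnder_le_of_eventually_le l (x := 0) ?_
    filter_upwards [hD.eventually_gt_atTop 0, hP, hlow] with i hDi hP1 hi
    exact div_nonneg (neg_nonneg.mpr (log_nonpos (hi.trans' (by positivity)) hP1)) hDi.le
  exact (limsup_le_limsup hbound hcobdd hlim.isBoundedUnder_le).trans hlim.limsup_eq.le

theorem stmt_18_general
    {Ω : Type*} [MeasurableSpace Ω] (μ : Measure Ω) [IsProbabilityMeasure μ]
    (V β : Ω → ℝ) (hβ : Measurable β)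
    (lam δ δ' γ g₀ ω₀ α ε : ℝ)
    (hlam : 0 < lam) (hδ : 0 < δ) (hγ : 0 < γ)
    (hω₀ : 0 < ω₀) (hα : 2 < α) (hε : 0 < ε)
    (hβsupp : ∀ ω, β ω ∈ Set.Icc (δ / γ) (δ' / g₀))
    (hVtail : ∀ x : ℝ, 0 < x →
      (μ {ω | V ω > x}).toReal =
        ∫ ω, Real.exp (-(π * lam * (β ω * x / ω₀) ^ (2 / α))) ∂μ)
    (hβmass : 0 < (μ {ω | β ω < (1 + ε) * (δ / γ)}).toReal) :
    Filter.limsup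
      (fun x : ℝ =>
        (-Real.log ((μ {ω | V ω > x}).toReal)) /
          (π * lam * (δ * x / (γ * ω₀)) ^ (2 / α)))
      atTop ≤ (1 + ε) ^ (2 / α) := by
  have hr : 0 < 2 / α := by positivity
  have hβpos : ∀ ω, 0 < β ω := fun ω => (div_pos hδ hγ).trans_le (hβsupp ω).1
  have hD : Tendsto (fun x : ℝ => π * lam * (δ * x / (γ * ω₀)) ^ (2 / α)) atTop atTop :=
    ((tendsto_rpow_atTop hr).comp ((tendsto_id.const_mul_atTop hδ).atTop_div_const
      (by positivity))).const_mul_atTop (by positivity)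
  have hint (x : ℝ) (hx : 0 < x) :
      Integrable (fun ω => exp (-(π * lam * (β ω * x / ω₀) ^ (2 / α)))) μ := by
    refine .of_bound (by fun_prop : Measurable _).aestronglyMeasurable 1 (.of_forall fun ω => ?_)
    rw [norm_of_nonneg (exp_pos _).le, exp_le_one_iff, neg_nonpos]
    have := hβpos ω
    positivity
  have hkernel (x : ℝ) (hx : 0 < x) (ω : Ω) (hω : β ω < (1 + ε) * (δ / γ)) :
      exp (-((1 + ε) ^ (2 / α) * (π * lam * (δ * x / (γ * ω₀)) ^ (2 / α)))) ≤
        exp (-(π * lam * (β ω * x / ω₀) ^ (2 / α))) := by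
    have := hβpos ω
    rw [exp_le_exp, neg_le_neg_iff]
    calc π * lam * (β ω * x / ω₀) ^ (2 / α)
        ≤ π * lam * ((1 + ε) * (δ / γ) * x / ω₀) ^ (2 / α) := by gcongr
      _ = (1 + ε) ^ (2 / α) * (π * lam * (δ * x / (γ * ω₀)) ^ (2 / α)) := by
        rw [mul_left_comm, ← mul_rpow (by positivity) (by positivity)]
        ring_nf
  refine limsup_neg_log_div_le_of_mul_exp_le hβmass hD (.of_forall fun _ => measureReal_le_one) ?_
  filter_upwards [eventually_gt_atTop 0] with x hx
  rw [hVtail x hx, mul_comm]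
  exact mul_measureReal_le_integral_of_le_on (measurableSet_lt hβ measurable_const) (hint x hx)
    (.of_forall fun _ => (exp_pos _).le) (hkernel x hx)

/-- Lower-tail-bound half of the sparse-scattering power–gain lemma: if
`Pr(V > x) = E[exp (-π λ (β x / ω₀)^{2/α})]` with `β` supported in `[δ/γ, δ'/g₀]` and
`Pr(β < (1+ε)δ/γ) > 0`, then
`limsup_{x→∞} (-log Pr(V > x)) / (π λ (δ x/(γ ω₀))^{2/α}) ≤ (1+ε)^{2/α}`. -/
theorem stmt_18
    {Ω : Type*} [MeasurableSpace Ω] (μ : Measure Ω) [IsProbabilityMeasure μ]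
    (V β : Ω → ℝ) (hV : Measurable V) (hβ : Measurable β)
    (lam δ δ' γ g₀ ω₀ α ε : ℝ)
    (hlam : 0 < lam) (hδ : 0 < δ) (hδδ' : δ ≤ δ') (hγ : 0 < γ) (hg₀ : 0 < g₀)
    (hω₀ : 0 < ω₀) (hα : 2 < α) (hε : 0 < ε)
    (hβsupp : ∀ ω, β ω ∈ Set.Icc (δ / γ) (δ' / g₀))
    (hVtail : ∀ x : ℝ, 0 < x →
      (μ {ω | V ω > x}).toReal =
        ∫ ω, Real.exp (-(π * lam * (β ω * x / ω₀) ^ (2 / α))) ∂μ)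
    (hβmass : 0 < (μ {ω | β ω < (1 + ε) * (δ / γ)}).toReal) :
    Filter.limsup
      (fun x : ℝ =>
        (-Real.log ((μ {ω | V ω > x}).toReal)) /
          (π * lam * (δ * x / (γ * ω₀)) ^ (2 / α)))
      atTop ≤ (1 + ε) ^ (2 / α) :=
  stmt_18_general μ V β hβ lam δ δ' γ g₀ ω₀ α ε hlam hδ hγ hω₀ hα hε hβsupp hVtail hβmass
end
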